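/- arXiv:1407.1114 — 2 statements merged into one kernel-verified Lean document; each statement's English description precedes it below -/
import Mathlib

section
/- Let d ≥ 1, let λ₁, …, λ_d be positive reals, let a₁, …, a_d be independent standard normal random variables, and set S = Σᵢ λᵢ(aᵢ² − 1) and θ = (2·Σᵢ λᵢ²)^{−1/2}. If θ·λᵢ ≤ 1/2 for every i, then E[exp(θS/2)] ≤ e^{1/4}. -/
/-!
By independence the moment generating function of `S` factorises. For a standard normal `a`,
`E[exp(c (a² - 1))] = e^{-c} / √(1 - 2c)`, and the inequality `log (1 - b) ≥ -b - b²` for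
`b ∈ [0, 1/2]`, applied with `b = 2c = θλᵢ`, bounds this factor by `exp(2c²)`. Multiplying,
`E[exp(θS/2)] ≤ exp(θ² Σ λᵢ² / 2) = e^{1/4}`.
-/

open MeasureTheory ProbabilityTheory Real

lemma Real.exp_neg_sub_sq_le_one_sub {b : ℝ} (h0 : 0 ≤ b) (h1 : b ≤ 1 / 2) :
    exp (-b - b ^ 2) ≤ 1 - b := by
  have hexp : (1 + b + b ^ 2 / 2) * (1 + b ^ 2) ≤ exp b * exp (b ^ 2) :=
    mul_le_mul (quadratic_le_exp_of_nonneg h0) (by linarith [add_one_le_exp (b ^ 2)])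
      (by positivity) (exp_pos b).le
  -- `(1 - b) (1 + b + b²/2) (1 + b²) = 1 + b²(1 - b - b² - b³)/2`
  have hpoly : 1 ≤ (1 - b) * ((1 + b + b ^ 2 / 2) * (1 + b ^ 2)) := by
    have : 0 ≤ 1 - b - b ^ 2 - b ^ 3 := by nlinarith
    nlinarith [mul_nonneg (sq_nonneg b) this]
  rw [sub_eq_add_neg, ← neg_add, exp_neg, exp_add, inv_le_iff_one_le_mul₀' (by positivity)]
  exact hpoly.trans (by rw [mul_comm]; gcongr; linarith)

lemma integral_exp_mul_sq_sub_one_gaussianReal {c : ℝ} (hc : c < 1 / 2) :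
    ∫ x, exp (c * (x ^ 2 - 1)) ∂gaussianReal 0 1 = exp (-c) / √(1 - 2 * c) := by
  have hpdf (x : ℝ) : gaussianPDFReal 0 1 x • exp (c * (x ^ 2 - 1))
      = ((√(2 * π))⁻¹ * exp (-c)) * exp (-(1 / 2 - c) * x ^ 2) := by
    simp only [gaussianPDFReal, NNReal.coe_one, mul_one, sub_zero, smul_eq_mul, mul_assoc,
      ← exp_add]
    congr 2
    ring
  have hsqrt : √(π / (1 / 2 - c)) = √(2 * π) / √(1 - 2 * c) := by
    rw [← sqrt_div' _ (by linarith)]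
    congr 1
    field_simp
  rw [integral_gaussianReal_eq_integral_smul one_ne_zero, integral_congr_ae (.of_forall hpdf),
    integral_const_mul, integral_gaussian, hsqrt]
  field_simp

lemma mgf_sq_sub_one_gaussianReal_le {c : ℝ} (h0 : 0 ≤ c) (h1 : c ≤ 1 / 4) :
    mgf (fun x ↦ x ^ 2 - 1) (gaussianReal 0 1) c ≤ exp (2 * c ^ 2) := by
  have hsqrt : exp (-c - 2 * c ^ 2) ≤ √(1 - 2 * c) := by
    rw [le_sqrt (exp_pos _).le (by linarith), ← exp_nat_mul]
    convert exp_neg_sub_sq_le_one_sub (b := 2 * c) (by linarith) (by linarith) using 2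
    push_cast
    ring
  rw [mgf, integral_exp_mul_sq_sub_one_gaussianReal (by linarith),
    div_le_iff₀ ((exp_pos _).trans_le hsqrt)]
  calc exp (-c) = exp (2 * c ^ 2) * exp (-c - 2 * c ^ 2) := by rw [← exp_add]; ring_nf
    _ ≤ exp (2 * c ^ 2) * √(1 - 2 * c) := by gcongr

theorem ProbabilityTheory.iIndepFun.mgf_sum_mul_sq_sub_one_le {Ω ι : Type*} [MeasurableSpace Ω]
    [Fintype ι] {μ : Measure Ω} {a : ι → Ω → ℝ} (hindep : iIndepFun a μ)
    (hlaw : ∀ i, HasLaw (a i) (gaussianReal 0 1) μ) {l : ι → ℝ} {t : ℝ}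
    (h0 : ∀ i, 0 ≤ t * l i) (h1 : ∀ i, t * l i ≤ 1 / 4) :
    mgf (fun ω ↦ ∑ i, l i * (a i ω ^ 2 - 1)) μ t ≤ exp (2 * t ^ 2 * ∑ i, l i ^ 2) := by
  set X : ι → Ω → ℝ := fun i ω ↦ l i * (a i ω ^ 2 - 1)
  have hX : iIndepFun X μ := hindep.comp (fun i x ↦ l i * (x ^ 2 - 1)) fun i ↦ by fun_prop
  have hmgf (i : ι) : mgf (X i) μ t = mgf (fun x ↦ x ^ 2 - 1) (gaussianReal 0 1) (t * l i) := by
    rw [mgf_const_mul, ← (hlaw i).map_eq, mgf_map (hlaw i).aemeasurable (by fun_prop), mul_comm]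
    rfl
  calc mgf (fun ω ↦ ∑ i, X i ω) μ t = ∏ i, mgf (X i) μ t := by
        rw [← hX.mgf_sum₀ (fun i ↦ by fun_prop), Finset.sum_fn]
    _ ≤ ∏ i, exp (2 * (t * l i) ^ 2) :=
        Finset.prod_le_prod (fun i _ ↦ mgf_nonneg) fun i _ ↦
          hmgf i ▸ mgf_sq_sub_one_gaussianReal_le (h0 i) (h1 i)
    _ = exp (2 * t ^ 2 * ∑ i, l i ^ 2) := by
        rw [← exp_sum, Finset.mul_sum]
        simp only [mul_pow, mul_assoc]

theorem mgf_gaussian_quadratic_form_le_general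
    {Ω : Type*} [MeasurableSpace Ω] (μ : Measure Ω)
    (d : ℕ) (l : Fin d → ℝ) (hl : ∀ i, 0 < l i)
    (a : Fin d → Ω → ℝ)
    (hindep : iIndepFun a μ)
    (hlaw : ∀ i, μ.map (a i) = gaussianReal 0 1)
    (θ : ℝ) (hθdef : θ = (2 * ∑ i, (l i) ^ 2) ^ (-(1 : ℝ) / 2))
    (hθl : ∀ i, θ * l i ≤ 1 / 2) :
    ∫ ω, Real.exp (θ / 2 * ∑ i, l i * ((a i ω) ^ 2 - 1)) ∂μ ≤ Real.exp (1 / 4) := by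
  have hS : 0 ≤ 2 * ∑ i, l i ^ 2 := by positivity
  have hθ : 0 ≤ θ := hθdef ▸ rpow_nonneg hS _
  have hθsq : θ ^ 2 * (2 * ∑ i, l i ^ 2) ≤ 1 := by
    rw [hθdef, ← rpow_natCast, ← rpow_mul hS, show -(1 : ℝ) / 2 * (2 : ℕ) = -1 by norm_num,
      rpow_neg_one]
    exact inv_mul_le_one
  have hGauss (i : Fin d) : HasLaw (a i) (gaussianReal 0 1) μ :=
    ⟨.of_map_ne_zero (hlaw i ▸ IsProbabilityMeasure.ne_zero _), hlaw i⟩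
  calc ∫ ω, exp (θ / 2 * ∑ i, l i * (a i ω ^ 2 - 1)) ∂μ
      = mgf (fun ω ↦ ∑ i, l i * (a i ω ^ 2 - 1)) μ (θ / 2) := rfl
    _ ≤ exp (2 * (θ / 2) ^ 2 * ∑ i, l i ^ 2) :=
        hindep.mgf_sum_mul_sq_sub_one_le hGauss (fun i ↦ by positivity [hl i])
          fun i ↦ by linarith [hθl i]
    _ ≤ exp (1 / 4) := by gcongr; linarith

/-- The Chernoff-parameter bound in the proof of Lemma 7.1: with
`S = ∑ i, λᵢ (aᵢ² - 1)` for i.i.d. standard normals `aᵢ` and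
`θ = (2 ∑ λᵢ²)^{-1/2}`, if `θ λᵢ ≤ 1/2` for every `i`, then
`E[exp(θS/2)] ≤ e^{1/4}`. -/
theorem mgf_gaussian_quadratic_form_le
    {Ω : Type*} [MeasurableSpace Ω] (μ : Measure Ω) [IsProbabilityMeasure μ]
    (d : ℕ) (hd : 1 ≤ d) (l : Fin d → ℝ) (hl : ∀ i, 0 < l i)
    (a : Fin d → Ω → ℝ) (hmeas : ∀ i, Measurable (a i))
    (hindep : iIndepFun a μ)
    (hlaw : ∀ i, μ.map (a i) = gaussianReal 0 1)
    (θ : ℝ) (hθdef : θ = (2 * ∑ i, (l i) ^ 2) ^ (-(1 : ℝ) / 2))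
    (hθl : ∀ i, θ * l i ≤ 1 / 2) :
    ∫ ω, Real.exp (θ / 2 * ∑ i, l i * ((a i ω) ^ 2 - 1)) ∂μ ≤ Real.exp (1 / 4) :=
  mgf_gaussian_quadratic_form_le_general μ d l hl a hindep hlaw θ hθdef hθl
end

section
/- Let d ≥ 2 be an integer and let 𝕊^d be the unit sphere in ℝ^{d+1}, equipped with the spherical distance ρ(u,v) = arccos⟨u,v⟩. Let x, y ∈ 𝕊^d with ε := ρ(x,y) ∈ (0, π), and let r ∈ (0, π). Let P_x(r) and P_y(r) be the uniform probability measures on the sets S_x(r) = {z ∈ 𝕊^d : ρ(x,z) = r} and S_y(r) = {z ∈ 𝕊^d : ρ(y,z) = r}. Then W₁(P_x(r), P_y(r)) ≤ ε·(1 − ((d−1)/(2d))·sin²(r)); equivalently, the coarse Ricci curvature κ(x,y) := 1 − W₁(P_x(r), P_y(r))/ρ(x,y) satisfies κ(x,y) ≥ ((d−1)/(2d))·sin²(r). -/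
/-!
Couple `P_x(r)` with `P_y(r)` through the rotation `R` by the angle `ε` in the plane of `x` and
`y`: it carries `S_x(r)` onto `S_y(r)` and preserves Hausdorff measure. If `e ⊥ x` is the unit
vector of that plane, `R` moves a unit vector `z` by at most `ε (1 + ⟨z,x⟩² + ⟨z,e⟩²) / 2`
(concavity of `sin`). On `S_x(r)` we have `⟨z,x⟩ = cos r`, and since `P_x(r)` is invariant under
the isometries fixing `x`, the `d` orthonormal directions orthogonal to `x` share the remaining
second moment `sin² r` equally, so `⟨z,e⟩²` has mean `sin² r / d`.
-/

open MeasureTheory Real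

/-- The spherical (geodesic) distance `ρ(u,v) = arccos ⟨u,v⟩` on the unit sphere. -/
noncomputable def sphDist {d : ℕ} (u v : EuclideanSpace ℝ (Fin (d + 1))) : ℝ :=
  Real.arccos (inner ℝ u v)

/-- The set of points of the unit sphere `𝕊^d ⊆ ℝ^{d+1}` at spherical distance `r`
from `x`. -/
def sphShell (d : ℕ) (x : EuclideanSpace ℝ (Fin (d + 1))) (r : ℝ) :
    Set (EuclideanSpace ℝ (Fin (d + 1))) :=
  {z | ‖z‖ = 1 ∧ sphDist x z = r}

/-- The uniform probability measure on the set of points of `𝕊^d` at spherical distance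
`r` from `x`: the `(d-1)`-dimensional Hausdorff measure restricted to that set and
normalized to total mass one. -/
noncomputable def uniformShell (d : ℕ) (x : EuclideanSpace ℝ (Fin (d + 1))) (r : ℝ) :
    Measure (EuclideanSpace ℝ (Fin (d + 1))) :=
  (μH[(d : ℝ) - 1] (sphShell d x r))⁻¹ • (μH[(d : ℝ) - 1]).restrict (sphShell d x r)

/-- The `L¹`-Wasserstein distance between two measures `μ, ν` with respect to a distance
function `ρ`: the infimum over couplings `ξ` of `μ` and `ν` of `∬ ρ dξ`. -/
noncomputable def W1 {X : Type*} [MeasurableSpace X] (ρ : X → X → ℝ)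
    (μ ν : Measure X) : ℝ :=
  ⨅ ξ : {ξ : Measure (X × X) // ξ.map Prod.fst = μ ∧ ξ.map Prod.snd = ν},
    ∫ p, ρ p.1 p.2 ∂(ξ : Measure (X × X))

open Module ProbabilityTheory
open scoped RealInnerProductSpace

theorem mul_sin_le_sin_mul {c t : ℝ} (hc0 : 0 ≤ c) (hc1 : c ≤ 1) (ht0 : 0 ≤ t) (htπ : t ≤ π) :
    c * sin t ≤ sin (c * t) := by
  have h := strictConcaveOn_sin_Icc.concaveOn.2 ⟨ht0, htπ⟩ ⟨le_rfl, pi_pos.le⟩ hc0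
    (sub_nonneg.2 hc1) (add_sub_cancel c 1)
  simpa using h

theorem cos_mul_le_one_sub {c θ : ℝ} (hc0 : 0 ≤ c) (hc1 : c ≤ 1) (hθ0 : 0 ≤ θ)
    (hθ : θ ≤ 2 * π) : cos (c * θ) ≤ 1 - c ^ 2 * (1 - cos θ) := by
  have cos_eq (a : ℝ) : cos a = 1 - 2 * sin (a / 2) ^ 2 := by
    rw [← mul_div_cancel₀ a two_ne_zero, cos_two_mul, cos_sq', mul_div_cancel_left₀ _ two_ne_zero]
    ring
  have hsin : c * sin (θ / 2) ≤ sin (c * (θ / 2)) :=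
    mul_sin_le_sin_mul hc0 hc1 (by positivity) (by linarith)
  have hsin0 : 0 ≤ sin (θ / 2) := sin_nonneg_of_nonneg_of_le_pi (by positivity) (by linarith)
  rw [cos_eq, cos_eq θ, mul_div_assoc]
  nlinarith [mul_nonneg hc0 hsin0]

theorem arccos_one_sub_mul_le {c2 θ : ℝ} (hc0 : 0 ≤ c2) (hc1 : c2 ≤ 1) (hθ0 : 0 ≤ θ)
    (hθπ : θ ≤ π) : arccos (1 - c2 * (1 - cos θ)) ≤ θ / 2 * (1 + c2) := by
  obtain ⟨c, hc, rfl⟩ : ∃ c, 0 ≤ c ∧ c ^ 2 = c2 := ⟨√c2, sqrt_nonneg _, sq_sqrt hc0⟩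
  have hc1 : c ≤ 1 := by nlinarith
  calc arccos (1 - c ^ 2 * (1 - cos θ))
      ≤ arccos (cos (c * θ)) := arccos_le_arccos (cos_mul_le_one_sub hc hc1 hθ0 (by linarith))
    _ = c * θ := arccos_cos (by positivity) (by nlinarith)
    _ ≤ θ / 2 * (1 + c ^ 2) := by nlinarith [sq_nonneg (1 - c)]

section PlaneRotation

variable {E : Type*} [NormedAddCommGroup E] [InnerProductSpace ℝ E]

theorem exists_unit_orthogonal_eq_cos_smul_add_sin_smul {x y : E} {θ : ℝ} (hx : ‖x‖ = 1)
    (hy : ‖y‖ = 1) (hxy : ⟪x, y⟫ = cos θ) (hθ : sin θ ≠ 0) :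
    ∃ e : E, ‖e‖ = 1 ∧ ⟪x, e⟫ = 0 ∧ y = cos θ • x + sin θ • e := by
  refine ⟨(sin θ)⁻¹ • (y - cos θ • x), ?_, ?_, ?_⟩
  · have hsq : ‖y - cos θ • x‖ ^ 2 = sin θ ^ 2 := by
      rw [@norm_sub_sq_real, norm_smul, real_inner_smul_right, real_inner_comm, hxy, hx, hy,
        norm_eq_abs, sin_sq]
      ring_nf; rw [sq_abs]; ring
    rw [norm_smul, norm_inv, norm_eq_abs, ← sq_eq_sq₀ (by positivity) zero_le_one, mul_pow,
      hsq, inv_pow, sq_abs, inv_mul_cancel₀ (pow_ne_zero 2 hθ), one_pow]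
  · rw [real_inner_smul_right, inner_sub_right, real_inner_smul_right, real_inner_self_eq_norm_sq,
      hx, hxy]
    ring
  · rw [smul_smul, mul_inv_cancel₀ hθ, one_smul, add_sub_cancel]

/-- For orthonormal `u, v`: the rotation by `θ` of the plane spanned by `u, v`, sending
`u ↦ cos θ • u + sin θ • v` and `v ↦ -sin θ • u + cos θ • v`, and the identity on its
orthogonal complement. -/
noncomputable def planeRotationLinearMap (u v : E) (θ : ℝ) : E →ₗ[ℝ] E where
  toFun z := z + ((cos θ - 1) * ⟪z, u⟫ - sin θ * ⟪z, v⟫) • u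
    + (sin θ * ⟪z, u⟫ + (cos θ - 1) * ⟪z, v⟫) • v
  map_add' z w := by simp only [inner_add_left]; module
  map_smul' c z := by simp only [real_inner_smul_left, RingHom.id_apply]; module

variable {u v : E}

theorem inner_planeRotationLinearMap (hu : ‖u‖ = 1) (hv : ‖v‖ = 1) (huv : ⟪u, v⟫ = 0)
    (θ : ℝ) (z w : E) :
    ⟪planeRotationLinearMap u v θ z, planeRotationLinearMap u v θ w⟫ = ⟪z, w⟫ := by
  have hvu : ⟪v, u⟫ = 0 := by rw [real_inner_comm, huv]
  have huw : ⟪u, w⟫ = ⟪w, u⟫ := real_inner_comm w u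
  have hvw : ⟪v, w⟫ = ⟪w, v⟫ := real_inner_comm w v
  simp only [planeRotationLinearMap, LinearMap.coe_mk, AddHom.coe_mk, inner_add_left,
    inner_add_right, real_inner_smul_left, real_inner_smul_right, real_inner_self_eq_norm_sq,
    hu, hv, huv, hvu, huw, hvw]
  linear_combination (⟪z, u⟫ * ⟪w, u⟫ + ⟪z, v⟫ * ⟪w, v⟫) * sin_sq_add_cos_sq θ

theorem inner_sq_add_inner_sq_le (hu : ‖u‖ = 1) (hv : ‖v‖ = 1) (huv : ⟪u, v⟫ = 0) (z : E) :
    ⟪z, u⟫ ^ 2 + ⟪z, v⟫ ^ 2 ≤ ‖z‖ ^ 2 := by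
  have hvu : ⟪v, u⟫ = 0 := by rw [real_inner_comm, huv]
  have huz : ⟪u, z⟫ = ⟪z, u⟫ := real_inner_comm z u
  have hvz : ⟪v, z⟫ = ⟪z, v⟫ := real_inner_comm z v
  have h := real_inner_self_nonneg (x := z - ⟪z, u⟫ • u - ⟪z, v⟫ • v)
  simp only [inner_sub_left, inner_sub_right, real_inner_smul_left, real_inner_smul_right,
    real_inner_self_eq_norm_sq, norm_smul, norm_eq_abs, hu, hv, mul_one, sq_abs, huv, hvu,
    huz, hvz, mul_zero, sub_zero] at h
  linarith

variable [FiniteDimensional ℝ E]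

noncomputable def planeRotation (hu : ‖u‖ = 1) (hv : ‖v‖ = 1) (huv : ⟪u, v⟫ = 0) (θ : ℝ) :
    E ≃ₗᵢ[ℝ] E :=
  ((planeRotationLinearMap u v θ).isometryOfInner
    (inner_planeRotationLinearMap hu hv huv θ)).toLinearIsometryEquiv rfl

theorem planeRotation_apply_left (hu : ‖u‖ = 1) (hv : ‖v‖ = 1) (huv : ⟪u, v⟫ = 0) (θ : ℝ) :
    planeRotation hu hv huv θ u = cos θ • u + sin θ • v := by
  simp only [planeRotation, LinearIsometry.coe_toLinearIsometryEquiv,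
    LinearMap.coe_isometryOfInner, planeRotationLinearMap, LinearMap.coe_mk, AddHom.coe_mk,
    real_inner_self_eq_norm_sq, hu, huv]
  module

theorem inner_self_planeRotation (hu : ‖u‖ = 1) (hv : ‖v‖ = 1) (huv : ⟪u, v⟫ = 0) (θ : ℝ)
    (z : E) :
    ⟪z, planeRotation hu hv huv θ z⟫ = ‖z‖ ^ 2 - (⟪z, u⟫ ^ 2 + ⟪z, v⟫ ^ 2) * (1 - cos θ) := by
  simp only [planeRotation, LinearIsometry.coe_toLinearIsometryEquiv,
    LinearMap.coe_isometryOfInner, planeRotationLinearMap, LinearMap.coe_mk, AddHom.coe_mk,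
    inner_add_right, real_inner_smul_right, real_inner_self_eq_norm_sq]
  ring

end PlaneRotation

theorem W1_map_le {X : Type*} [MeasurableSpace X] {ρ : X → X → ℝ} (hρ0 : ∀ a b, 0 ≤ ρ a b)
    (hρ : Measurable fun p : X × X => ρ p.1 p.2) (μ : Measure X) {f : X → X}
    (hf : Measurable f) : W1 ρ μ (μ.map f) ≤ ∫ z, ρ z (f z) ∂μ := by
  have hgraph : Measurable fun z => (z, f z) := measurable_id.prodMk hf
  have hbdd : BddBelow (Set.range fun ξ : {ξ : Measure (X × X) //
      ξ.map Prod.fst = μ ∧ ξ.map Prod.snd = μ.map f} => ∫ p, ρ p.1 p.2 ∂(ξ : Measure (X × X))) :=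
    ⟨0, by rintro _ ⟨ξ, rfl⟩; exact integral_nonneg fun p => hρ0 _ _⟩
  calc W1 ρ μ (μ.map f) ≤ ∫ p, ρ p.1 p.2 ∂(μ.map fun z => (z, f z)) := by
        refine ciInf_le hbdd ⟨_, ?_, ?_⟩
        · rw [Measure.map_map measurable_fst hgraph]; exact Measure.map_id
        · rw [Measure.map_map measurable_snd hgraph]; rfl
    _ = ∫ z, ρ z (f z) ∂μ := integral_map hgraph.aemeasurable hρ.aestronglyMeasurable

section Moments

variable {E : Type*} [NormedAddCommGroup E] [InnerProductSpace ℝ E] [MeasurableSpace E]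
  [BorelSpace E] {μ : Measure E}

theorem integral_inner_sq_map_eq (L : E ≃ₗᵢ[ℝ] E) (hL : μ.map L = μ) (w : E) :
    ∫ z, ⟪z, L w⟫ ^ 2 ∂μ = ∫ z, ⟪z, w⟫ ^ 2 ∂μ := by
  have hL : MeasurePreserving L.toMeasurableEquiv μ μ := ⟨L.continuous.measurable, hL⟩
  rw [← hL.integral_comp' fun z => ⟪z, L w⟫ ^ 2]
  simp

theorem integrable_inner_sq [IsFiniteMeasure μ] (hμ : ∀ᵐ z ∂μ, ‖z‖ = 1) (w : E) :
    Integrable (fun z => ⟪z, w⟫ ^ 2) μ := by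
  refine .of_bound (by fun_prop) (‖w‖ ^ 2) (hμ.mono fun z hz => ?_)
  have h := abs_real_inner_le_norm z w
  rw [hz, one_mul] at h
  rw [norm_pow, norm_eq_abs]
  exact pow_le_pow_left₀ (abs_nonneg _) h 2

theorem OrthonormalBasis.sum_integral_inner_sq {ι : Type*} [Fintype ι] [IsFiniteMeasure μ]
    (b : OrthonormalBasis ι ℝ E) (hμ : ∀ᵐ z ∂μ, ‖z‖ = 1) :
    ∑ i, ∫ z, ⟪z, b i⟫ ^ 2 ∂μ = μ.real Set.univ := by
  rw [← integral_finsetSum _ fun i _ => integrable_inner_sq hμ _]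
  calc ∫ z, ∑ i, ⟪z, b i⟫ ^ 2 ∂μ = ∫ _, (1 : ℝ) ∂μ :=
        integral_congr_ae (hμ.mono fun z hz => by simp [b.sum_sq_inner_left, hz])
    _ = μ.real Set.univ := by simp

theorem integral_inner_sq_add_mul_integral_inner_sq [FiniteDimensional ℝ E] [IsFiniteMeasure μ]
    {x e : E} (hx : ‖x‖ = 1) (he : ‖e‖ = 1) (hxe : ⟪x, e⟫ = 0)
    (hμx : ∀ L : E ≃ₗᵢ[ℝ] E, L x = x → μ.map L = μ) (hμ : ∀ᵐ z ∂μ, ‖z‖ = 1) :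
    ∫ z, ⟪z, x⟫ ^ 2 ∂μ + (finrank ℝ E - 1 : ℝ) * ∫ z, ⟪z, e⟫ ^ 2 ∂μ = μ.real Set.univ := by
  classical
  have integral_eq_of_orthogonal (w : E) (hw : ‖w‖ = 1) (hxw : ⟪x, w⟫ = 0) :
      ∫ z, ⟪z, w⟫ ^ 2 ∂μ = ∫ z, ⟪z, e⟫ ^ 2 ∂μ := by
    set L := (ℝ ∙ (e - w))ᗮ.reflection
    have hLx : L x = x := Submodule.reflection_mem_subspace_eq_self <|
      Submodule.mem_orthogonal_singleton_iff_inner_right.2 <| by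
        rw [inner_sub_left, real_inner_comm, hxe, real_inner_comm, hxw, sub_zero]
    rw [← Submodule.reflection_sub (he.trans hw.symm), integral_inner_sq_map_eq L (hμx L hLx)]
  have hx1 : Orthonormal ℝ ((↑) : ({x} : Set E) → E) :=
    orthonormal_subtype_iff_ite.2 (by simp [hx])
  obtain ⟨u, b, hxu, hb⟩ := hx1.exists_orthonormalBasis_extension
  set i₀ : u := ⟨x, hxu rfl⟩
  have hbi₀ : b i₀ = x := by rw [hb]
  have hcard : ((Finset.univ.erase i₀).card : ℝ) = finrank ℝ E - 1 := by
    rw [Finset.card_erase_of_mem (Finset.mem_univ _),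
      Nat.cast_pred (Finset.card_pos.2 ⟨i₀, Finset.mem_univ _⟩), Finset.card_univ,
      finrank_eq_card_basis b.toBasis]
  have hsum := b.sum_integral_inner_sq hμ
  rw [← Finset.add_sum_erase _ _ (Finset.mem_univ i₀), hbi₀] at hsum
  rwa [Finset.sum_congr rfl fun i hi => integral_eq_of_orthogonal (b i) (b.orthonormal.1 i)
    (hbi₀ ▸ b.orthonormal.2 (Finset.ne_of_mem_erase hi).symm), Finset.sum_const, nsmul_eq_mul,
    hcard] at hsum

end Moments

section Sphere

variable {d : ℕ} {x : EuclideanSpace ℝ (Fin (d + 1))} {r : ℝ}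

theorem sphDist_nonneg (u v : EuclideanSpace ℝ (Fin (d + 1))) : 0 ≤ sphDist u v :=
  arccos_nonneg _

theorem Continuous.sphDist {α : Type*} [TopologicalSpace α]
    {f g : α → EuclideanSpace ℝ (Fin (d + 1))} (hf : Continuous f) (hg : Continuous g) :
    Continuous fun a => _root_.sphDist (f a) (g a) :=
  continuous_arccos.comp (hf.inner hg)

theorem cos_sphDist {u v : EuclideanSpace ℝ (Fin (d + 1))} (hu : ‖u‖ = 1) (hv : ‖v‖ = 1) :
    cos (sphDist u v) = ⟪u, v⟫ := by
  have h := abs_real_inner_le_norm u v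
  rw [hu, hv, one_mul] at h
  exact cos_arccos (neg_le_of_abs_le h) (le_of_abs_le h)

theorem inner_eq_cos_of_mem_sphShell (hx : ‖x‖ = 1) {z : EuclideanSpace ℝ (Fin (d + 1))}
    (hz : z ∈ sphShell d x r) : ⟪x, z⟫ = cos r := by
  rw [← hz.2, cos_sphDist hx hz.1]

theorem isCompact_sphShell : IsCompact (sphShell d x r) :=
  (isCompact_sphere 0 1).of_isClosed_subset
    ((isClosed_eq continuous_norm continuous_const).inter
      (isClosed_eq (continuous_const.sphDist continuous_id) continuous_const))
    fun z hz => by simpa using hz.1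

theorem preimage_sphShell
    (L : EuclideanSpace ℝ (Fin (d + 1)) ≃ₗᵢ[ℝ] EuclideanSpace ℝ (Fin (d + 1)))
    (x : EuclideanSpace ℝ (Fin (d + 1))) (r : ℝ) :
    L ⁻¹' sphShell d (L x) r = sphShell d x r := by
  ext z
  simp [sphShell, sphDist]

theorem map_uniformShell
    (L : EuclideanSpace ℝ (Fin (d + 1)) ≃ₗᵢ[ℝ] EuclideanSpace ℝ (Fin (d + 1)))
    (x : EuclideanSpace ℝ (Fin (d + 1))) (r : ℝ) :
    (uniformShell d x r).map L = uniformShell d (L x) r := by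
  set s := sphShell d (L x) r
  have hH : (μH[(d : ℝ) - 1]).map L = μH[(d : ℝ) - 1] := L.toIsometryEquiv.map_hausdorffMeasure _
  have hpre : μH[(d : ℝ) - 1] (L ⁻¹' s) = μH[(d : ℝ) - 1] s :=
    L.toIsometryEquiv.hausdorffMeasure_preimage _ _
  have hres : ((μH[(d : ℝ) - 1]).restrict (L ⁻¹' s)).map L
      = ((μH[(d : ℝ) - 1]).map L).restrict s :=
    (L.toMeasurableEquiv.restrict_map _ _).symm
  rw [uniformShell, uniformShell, Measure.map_smul, ← preimage_sphShell L x r, hpre, hres, hH]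

/- `uniformShell d x r` is by definition the conditioned measure `μH[|S_x(r)]`; it is the zero
measure when `μH (S_x(r))` is `0` or `∞`. -/
instance : IsZeroOrProbabilityMeasure (uniformShell d x r) :=
  inferInstanceAs (IsZeroOrProbabilityMeasure (μH[(d : ℝ) - 1][|sphShell d x r]))

theorem ae_mem_sphShell : ∀ᵐ z ∂uniformShell d x r, z ∈ sphShell d x r :=
  ae_cond_mem isCompact_sphShell.isClosed.measurableSet

theorem integrable_uniformShell {f : EuclideanSpace ℝ (Fin (d + 1)) → ℝ} (hf : Continuous f) :
    Integrable f (uniformShell d x r) := by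
  obtain ⟨C, hC⟩ := isCompact_sphShell.exists_bound_of_continuousOn hf.continuousOn
  exact .of_bound hf.aestronglyMeasurable C (ae_mem_sphShell.mono hC)

theorem mul_integral_inner_sq_uniformShell {e : EuclideanSpace ℝ (Fin (d + 1))} (hx : ‖x‖ = 1)
    (he : ‖e‖ = 1) (hxe : ⟪x, e⟫ = 0) :
    d * ∫ z, ⟪z, e⟫ ^ 2 ∂uniformShell d x r = sin r ^ 2 * (uniformShell d x r).real Set.univ := by
  have h := integral_inner_sq_add_mul_integral_inner_sq (μ := uniformShell d x r) hx he hxe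
    (fun L hL => by rw [map_uniformShell, hL]) (ae_mem_sphShell.mono fun z hz => hz.1)
  have hcos : ∫ z, ⟪z, x⟫ ^ 2 ∂uniformShell d x r
      = cos r ^ 2 * (uniformShell d x r).real Set.univ := by
    rw [integral_congr_ae (ae_mem_sphShell.mono fun z hz => by
      rw [real_inner_comm, inner_eq_cos_of_mem_sphShell hx hz]), integral_const, smul_eq_mul,
      mul_comm]
  rw [hcos, finrank_euclideanSpace_fin, Nat.cast_add_one, add_sub_cancel_right] at h
  rw [sin_sq]
  linarith

theorem sphDist_planeRotation_le {u v : EuclideanSpace ℝ (Fin (d + 1))} (hu : ‖u‖ = 1)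
    (hv : ‖v‖ = 1) (huv : ⟪u, v⟫ = 0) {θ : ℝ} (hθ0 : 0 ≤ θ) (hθπ : θ ≤ π)
    {z : EuclideanSpace ℝ (Fin (d + 1))} (hz : ‖z‖ = 1) :
    sphDist z (planeRotation hu hv huv θ z) ≤ θ / 2 * (1 + (⟪z, u⟫ ^ 2 + ⟪z, v⟫ ^ 2)) := by
  have hbessel := inner_sq_add_inner_sq_le hu hv huv z
  rw [hz, one_pow] at hbessel
  rw [sphDist, inner_self_planeRotation, hz, one_pow]
  exact arccos_one_sub_mul_le (by positivity) hbessel hθ0 hθπ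

theorem integral_sphDist_planeRotation_uniformShell_le (hd : d ≠ 0)
    {e : EuclideanSpace ℝ (Fin (d + 1))} (hx : ‖x‖ = 1) (he : ‖e‖ = 1) (hxe : ⟪x, e⟫ = 0)
    {θ : ℝ} (hθ0 : 0 ≤ θ) (hθπ : θ ≤ π) :
    ∫ z, sphDist z (planeRotation hx he hxe θ z) ∂uniformShell d x r
      ≤ θ * (1 - ((d - 1) / (2 * d)) * sin r ^ 2) := by
  set R := planeRotation hx he hxe θ
  set μ := uniformShell d x r
  have hcost : ∀ᵐ z ∂μ, sphDist z (R z) ≤ θ / 2 * (1 + cos r ^ 2) + θ / 2 * ⟪z, e⟫ ^ 2 :=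
    ae_mem_sphShell.mono fun z hz => by
      have h := sphDist_planeRotation_le hx he hxe hθ0 hθπ hz.1
      rw [real_inner_comm, inner_eq_cos_of_mem_sphShell hx hz] at h
      linarith
  have hmoment : d * ∫ z, ⟪z, e⟫ ^ 2 ∂μ = sin r ^ 2 * μ.real Set.univ :=
    mul_integral_inner_sq_uniformShell hx he hxe
  have hd : (0 : ℝ) < d := Nat.cast_pos.2 (Nat.pos_of_ne_zero hd)
  have hcoef : ((d : ℝ) - 1) / (2 * d) ≤ 1 := by
    rw [div_le_one (by positivity)]
    linarith
  calc ∫ z, sphDist z (R z) ∂μ ≤ ∫ z, θ / 2 * (1 + cos r ^ 2) + θ / 2 * ⟪z, e⟫ ^ 2 ∂μ :=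
        integral_mono_ae (integrable_uniformShell (continuous_id.sphDist R.continuous))
          (integrable_uniformShell (by fun_prop)) hcost
    _ = μ.real Set.univ * (θ * (1 - ((d - 1) / (2 * d)) * sin r ^ 2)) := by
        rw [integral_add (integrable_const _) (integrable_uniformShell (by fun_prop)),
          integral_const, integral_const_mul, smul_eq_mul]
        field_simp
        linear_combination θ * hmoment + θ * μ.real Set.univ * d * sin_sq_add_cos_sq r
    _ ≤ θ * (1 - ((d - 1) / (2 * d)) * sin r ^ 2) :=
        mul_le_of_le_one_left (mul_nonneg hθ0 (by nlinarith [sin_sq_le_one r, sq_nonneg (sin r)]))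
          measureReal_le_one

end Sphere

theorem coarseRicci_spherical_shells_general
    (d : ℕ) (hd : 2 ≤ d)
    (x y : EuclideanSpace ℝ (Fin (d + 1))) (hx : ‖x‖ = 1) (hy : ‖y‖ = 1)
    (ε : ℝ) (hεdef : ε = sphDist x y) (hε : ε ∈ Set.Ioo 0 π)
    (r : ℝ) :
    W1 sphDist (uniformShell d x r) (uniformShell d y r)
      ≤ ε * (1 - (((d : ℝ) - 1) / (2 * d)) * Real.sin r ^ 2) := by
  obtain ⟨e, he, hxe, hye⟩ := exists_unit_orthogonal_eq_cos_smul_add_sin_smul hx hy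
    (by rw [hεdef, cos_sphDist hx hy]) (sin_pos_of_pos_of_lt_pi hε.1 hε.2).ne'
  set R := planeRotation hx he hxe ε
  calc W1 sphDist (uniformShell d x r) (uniformShell d y r)
      = W1 sphDist (uniformShell d x r) ((uniformShell d x r).map R) := by
        rw [map_uniformShell, planeRotation_apply_left, hye]
    _ ≤ ∫ z, sphDist z (R z) ∂uniformShell d x r :=
        W1_map_le sphDist_nonneg (continuous_fst.sphDist continuous_snd).measurable _
          R.continuous.measurable
    _ ≤ ε * (1 - ((d - 1) / (2 * d)) * sin r ^ 2) :=
        integral_sphDist_planeRotation_uniformShell_le (by omega) hx he hxe hε.1.le hε.2.le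

/-- Corollary 7.6 of the paper (clean form): for `x, y ∈ 𝕊^d` at spherical distance
`ε ∈ (0, π)` and `r ∈ (0, π)`,
`W₁(P_x(r), P_y(r)) ≤ ε (1 - ((d-1)/(2d)) sin²r)`; equivalently the coarse Ricci
curvature `κ(x,y) = 1 - W₁/ρ(x,y)` is at least `((d-1)/(2d)) sin²r`. -/
theorem coarseRicci_spherical_shells
    (d : ℕ) (hd : 2 ≤ d)
    (x y : EuclideanSpace ℝ (Fin (d + 1))) (hx : ‖x‖ = 1) (hy : ‖y‖ = 1)
    (ε : ℝ) (hεdef : ε = sphDist x y) (hε : ε ∈ Set.Ioo 0 π)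
    (r : ℝ) (hr : r ∈ Set.Ioo 0 π) :
    W1 sphDist (uniformShell d x r) (uniformShell d y r)
      ≤ ε * (1 - (((d : ℝ) - 1) / (2 * d)) * Real.sin r ^ 2) :=
  coarseRicci_spherical_shells_general d hd x y hx hy ε hεdef hε r
end
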